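/- arXiv:2411.19936 — 2 statements merged into one kernel-verified Lean document; each statement's English description precedes it below -/
import Mathlib

section
/- Let K ⊆ (ℙ¹)^{Φ} be the closure, in the product topology, of the image of the map emb_Φ : Hom_ℚ(E, ℂ) → (ℙ¹)^{Φ}, f ↦ ([1 : f(λ)])_{λ∈Φ}. For each w ∈ W, the homeomorphism σ_w : (ℙ¹)^{Φ} → (ℙ¹)^{Φ} defined by (σ_w(x))_λ := x_{w⁻¹(λ)} satisfies σ_w(K) = K. In other words, the natural Weyl group action on the Cartan subalgebra extends to an action of W on its wonderful compactification. -/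
open scoped Classical
noncomputable section

/-- A reduced crystallographic root system spanning `E`. -/
def IsRootSystem {E : Type*} [AddCommGroup E] [Module ℚ E] (Φ : Set E) : Prop :=
  Φ.Finite ∧ (0 : E) ∉ Φ ∧ Submodule.span ℚ Φ = ⊤ ∧ (∀ α ∈ Φ, -α ∈ Φ) ∧
    (∀ α ∈ Φ, ∃ f : E →ₗ[ℚ] ℚ, f α = 2 ∧ (∀ β ∈ Φ, ∃ n : ℤ, f β = (n : ℚ)) ∧
      ∀ β ∈ Φ, β - f β • α ∈ Φ) ∧
    ∀ α ∈ Φ, ∀ c : ℚ, c • α ∈ Φ → c = 1 ∨ c = -1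

/-- The reflections `s_α : v ↦ v − α∨(v)·α` attached to the roots `α ∈ Φ`,
viewed as linear automorphisms of `E`. -/
def reflections {E : Type*} [AddCommGroup E] [Module ℚ E] (Φ : Set E) :
    Set (E ≃ₗ[ℚ] E) :=
  {w | ∃ α ∈ Φ, ∃ f : E →ₗ[ℚ] ℚ, f α = 2 ∧ (∀ β ∈ Φ, ∃ n : ℤ, f β = (n : ℚ)) ∧
    (∀ β ∈ Φ, β - f β • α ∈ Φ) ∧ ∀ v : E, w v = v - f v • α}

/-- The Weyl group of `Φ`: the subgroup of `GL(E)` generated by the reflections. -/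
def weylGroup {E : Type*} [AddCommGroup E] [Module ℚ E] (Φ : Set E) :
    Subgroup (E ≃ₗ[ℚ] E) :=
  Subgroup.closure (reflections Φ)

/-- The embedding of the Cartan subalgebra `Hom_ℚ(E, ℂ)` into `(ℙ¹)^{Φ}`. -/
def embH {E : Type*} [AddCommGroup E] [Module ℚ E] (Φall : Finset E)
    (f : E →ₗ[ℚ] ℂ) : Φall → OnePoint ℂ :=
  fun l => ((f (l : E) : ℂ) : OnePoint ℂ)

/-- The map `σ_w : (ℙ¹)^{Φ} → (ℙ¹)^{Φ}`, `(σ_w(x))_λ = x_{w⁻¹(λ)}`. -/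
def sigmaMap {E : Type*} [AddCommGroup E] [Module ℚ E] (Φall : Finset E)
    (w : E ≃ₗ[ℚ] E) (x : Φall → OnePoint ℂ) : Φall → OnePoint ℂ :=
  fun l => if h : w.symm (l : E) ∈ Φall then x ⟨w.symm (l : E), h⟩ else x l

lemma weyl_pres {E : Type*} [AddCommGroup E] [Module ℚ E] (Φ : Set E)
    (w : E ≃ₗ[ℚ] E) (hw : w ∈ weylGroup Φ) :
    (∀ α ∈ Φ, w α ∈ Φ) ∧ (∀ α ∈ Φ, w.symm α ∈ Φ) := by
  refine Subgroup.closure_induction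
    (p := fun x _ => (∀ α ∈ Φ, x α ∈ Φ) ∧ (∀ α ∈ Φ, x.symm α ∈ Φ)) ?_ ?_ ?_ ?_ hw
  · rintro s ⟨α, hα, f, hf2, _, hrefl, hs⟩
    have hinv : ∀ v : E, s (s v) = v := by
      intro v
      rw [hs, hs]
      simp only [map_sub, map_smul, hf2, smul_eq_mul]
      module
    constructor
    · intro β hβ; rw [hs]; exact hrefl β hβ
    · intro β hβ
      have : s.symm β = s β := by
        conv_lhs => rw [← hinv β]
        exact s.symm_apply_apply _
      rw [this, hs]; exact hrefl β hβ
  · exact ⟨fun α hα => hα, fun α hα => hα⟩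
  · rintro x y _ _ ⟨hx, hx'⟩ ⟨hy, hy'⟩
    refine ⟨fun α hα => ?_, fun α hα => ?_⟩
    · show x (y α) ∈ Φ; exact hx _ (hy _ hα)
    · show y.symm (x.symm α) ∈ Φ; exact hy' _ (hx' _ hα)
  · rintro x _ ⟨hx, hx'⟩
    exact ⟨hx', hx⟩

lemma sigma_comp {E : Type*} [AddCommGroup E] [Module ℚ E] (Φall : Finset E)
    (w : E ≃ₗ[ℚ] E)
    (h1 : ∀ a ∈ Φall, w a ∈ Φall) (h2 : ∀ a ∈ Φall, w.symm a ∈ Φall)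
    (x : Φall → OnePoint ℂ) :
    sigmaMap Φall w.symm (sigmaMap Φall w x) = x := by
  funext l
  have ha : w.symm.symm (l : E) ∈ Φall := by
    simpa using h1 _ l.2
  have hb : w.symm ((⟨w.symm.symm (l : E), ha⟩ : Φall) : E) ∈ Φall := by
    simpa using l.2
  simp only [sigmaMap]
  rw [dif_pos ha, dif_pos hb]
  congr 1
  ext
  simp

lemma sigma_cont {E : Type*} [AddCommGroup E] [Module ℚ E] (Φall : Finset E)
    (w : E ≃ₗ[ℚ] E) : Continuous (sigmaMap Φall w) := by
  refine continuous_pi fun l => ?_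
  by_cases h : w.symm (l : E) ∈ Φall
  · simp only [sigmaMap, dif_pos h]; exact continuous_apply _
  · simp only [sigmaMap, dif_neg h]; exact continuous_apply _

/-- `σ_w` as a homeomorphism, when `w` preserves `Φall`. -/
def sigmaHomeo {E : Type*} [AddCommGroup E] [Module ℚ E] (Φall : Finset E)
    (w : E ≃ₗ[ℚ] E)
    (h1 : ∀ a ∈ Φall, w a ∈ Φall) (h2 : ∀ a ∈ Φall, w.symm a ∈ Φall) :
    (Φall → OnePoint ℂ) ≃ₜ (Φall → OnePoint ℂ) where
  toFun := sigmaMap Φall w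
  invFun := sigmaMap Φall w.symm
  left_inv := sigma_comp Φall w h1 h2
  right_inv := by
    intro x
    have := sigma_comp Φall w.symm (by simpa using h2) (by simpa using h1) x
    simpa using this
  continuous_toFun := sigma_cont Φall w
  continuous_invFun := sigma_cont Φall w.symm

theorem statement7 {E : Type*} [AddCommGroup E] [Module ℚ E] [FiniteDimensional ℚ E]
    (hr : 1 ≤ Module.finrank ℚ E)
    (Φ : Set E) (hΦ : IsRootSystem Φ)
    (Φall : Finset E) (hall : ∀ a : E, a ∈ Φall ↔ a ∈ Φ)
    (w : E ≃ₗ[ℚ] E) (hw : w ∈ weylGroup Φ) :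
    sigmaMap Φall w '' closure (Set.range (embH Φall))
      = closure (Set.range (embH Φall)) := by
  obtain ⟨hfwd, hbwd⟩ := weyl_pres Φ w hw
  have h1 : ∀ a ∈ Φall, w a ∈ Φall := fun a ha => (hall _).2 (hfwd a ((hall _).1 ha))
  have h2 : ∀ a ∈ Φall, w.symm a ∈ Φall := fun a ha => (hall _).2 (hbwd a ((hall _).1 ha))
  have key : sigmaMap Φall w '' Set.range (embH Φall) = Set.range (embH Φall) := by
    apply Set.eq_of_subset_of_subset
    · rintro _ ⟨_, ⟨f, rfl⟩, rfl⟩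
      refine ⟨f.comp w.symm.toLinearMap, ?_⟩
      funext l
      simp only [sigmaMap, dif_pos (h2 _ l.2), embH, LinearMap.comp_apply,
        LinearEquiv.coe_coe]
    · rintro _ ⟨f, rfl⟩
      refine ⟨embH Φall (f.comp w.toLinearMap), ⟨_, rfl⟩, ?_⟩
      funext l
      simp only [sigmaMap, dif_pos (h2 _ l.2), embH, LinearMap.comp_apply,
        LinearEquiv.coe_coe, LinearEquiv.apply_symm_apply]
  calc sigmaMap Φall w '' closure (Set.range (embH Φall))
      = (sigmaHomeo Φall w h1 h2) '' closure (Set.range (embH Φall)) := rfl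
    _ = closure ((sigmaHomeo Φall w h1 h2) '' Set.range (embH Φall)) :=
        (sigmaHomeo Φall w h1 h2).image_closure _
    _ = closure (Set.range (embH Φall)) := by rw [show ((sigmaHomeo Φall w h1 h2) '' Set.range (embH Φall)) = sigmaMap Φall w '' Set.range (embH Φall) from rfl, key]
end
end

section
/- For every integer k with 0 ≤ k ≤ r, the assignment Ψ ↦ F(Ψ) is a bijection from the set of maximal closed root subsystems of Φ of rank r − k onto the set of subsets P ⊆ Φ⁺ of cardinality r − k satisfying condition (⋆), and its inverse is P ↦ G(P) := Span_ℚ(P) ∩ Φ. -/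
open scoped Classical
noncomputable section

/-- `Ψ` is a closed root subsystem of `Θ`. -/
def IsClosedSub {E : Type*} [AddCommGroup E] (Θ Ψ : Set E) : Prop :=
  Ψ ⊆ Θ ∧ (∀ l ∈ Ψ, -l ∈ Ψ) ∧ ∀ l ∈ Ψ, ∀ m ∈ Ψ, l + m ∈ Θ → l + m ∈ Ψ

/-- The rank of a subset: the dimension of its `ℚ`-linear span. -/
def rankOf {E : Type*} [AddCommGroup E] [Module ℚ E] (Ψ : Set E) : ℕ :=
  Module.finrank ℚ (Submodule.span ℚ Ψ)

/-- `Ψ` is a maximal closed root subsystem of `Θ` of rank `m`. -/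
def IsMaxClosedOfRank {E : Type*} [AddCommGroup E] [Module ℚ E] (Θ Ψ : Set E) (m : ℕ) : Prop :=
  IsClosedSub Θ Ψ ∧ rankOf Ψ = m ∧
    ∀ Ψ' : Set E, IsClosedSub Θ Ψ' → rankOf Ψ' = m → Ψ ⊆ Ψ' → Ψ' = Ψ

/-- The (1-based) standard basis vector `e_i` of `ℚ^r`. -/
def eB (r : ℕ) (i : ℕ) : Fin r → ℚ := fun t => if (t : ℕ) + 1 = i then 1 else 0

/-- The root system of type `B_r`. -/
def rootsB (r : ℕ) : Set (Fin r → ℚ) :=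
  {v | ∃ i j : ℕ, 1 ≤ i ∧ i < j ∧ j ≤ r ∧
      (v = eB r i - eB r j ∨ v = eB r j - eB r i ∨
        v = eB r i + eB r j ∨ v = -(eB r i + eB r j))} ∪
    {v | ∃ i : ℕ, 1 ≤ i ∧ i ≤ r ∧ (v = eB r i ∨ v = -eB r i)}

/-- The positive roots of type `B_r`. -/
def posB (r : ℕ) : Set (Fin r → ℚ) :=
  {v | ∃ i j : ℕ, 1 ≤ i ∧ i < j ∧ j ≤ r ∧ (v = eB r i - eB r j ∨ v = eB r i + eB r j)} ∪
    {v | ∃ i : ℕ, 1 ≤ i ∧ i ≤ r ∧ v = eB r i}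

/-- `e_i + e_j`, interpreted as `e_i` when `i = j`. -/
def pB (r i j : ℕ) : Fin r → ℚ := if i = j then eB r i else eB r i + eB r j

/-- `e_i − e_j`, interpreted as `e_i` when `i = j`. -/
def mB (r i j : ℕ) : Fin r → ℚ := if i = j then eB r i else eB r i - eB r j

/-- `F(Ψ)` for type `B`. -/
def FmapB (r : ℕ) (Ψ : Set (Fin r → ℚ)) : Set (Fin r → ℚ) :=
  {v | ∃ i j : ℕ, 1 ≤ i ∧ i < j ∧ j ≤ r ∧
      (v = eB r i + eB r j ∨ v = eB r i - eB r j) ∧ v ∈ Ψ ∧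
      (∀ j' : ℕ, i ≤ j' → j' < j → pB r i j' ∉ Ψ ∧ mB r i j' ∉ Ψ) ∧
      ∀ i' : ℕ, i < i' → i' ≤ j → pB r i' j ∉ Ψ ∧ mB r i' j ∉ Ψ} ∪
    {v | ∃ i : ℕ, 1 ≤ i ∧ i ≤ r ∧ v = eB r i ∧ eB r i ∈ Ψ}

/-- The index pair `p(β) = (i, j)` of a positive root `β` of type `B_r`:
`p(e_i ± e_j) = (i, j)` for `i < j` and `p(e_i) = (i, i)`. -/
def idxB (r : ℕ) (v : Fin r → ℚ) (i j : ℕ) : Prop :=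
  (1 ≤ i ∧ i < j ∧ j ≤ r ∧ (v = eB r i + eB r j ∨ v = eB r i - eB r j)) ∨
    (1 ≤ i ∧ i = j ∧ j ≤ r ∧ v = eB r i)

/-- Condition (⋆) for type `B`: any two distinct elements `β, β′` of `P`, with index
pairs `p(β) = (i, j)` and `p(β′) = (i′, j′)`, satisfy `i ≠ i′` and `j ≠ j′`. -/
def starB (r : ℕ) (P : Set (Fin r → ℚ)) : Prop :=
  ∀ v ∈ P, ∀ v' ∈ P, v ≠ v' → ∀ i j i' j' : ℕ,
    idxB r v i j → idxB r v' i' j' → i ≠ i' ∧ j ≠ j'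

/-- `G(P) = Span_ℚ(P) ∩ Φ`. -/
def GmapB (r : ℕ) (P : Set (Fin r → ℚ)) : Set (Fin r → ℚ) :=
  (Submodule.span ℚ P : Set (Fin r → ℚ)) ∩ rootsB r

/-!
Write `e_i + σ e_j` (`σ = ±1`, read as `e_i` when `i = j`) for the positive root with index pair
`(i, j)`. In a set `P` satisfying `(⋆)`, the root with the largest second index `j₀` is the only
one with a nonzero `j₀`-coordinate. Peeling it off inductively shows that `P` is linearly
independent, and that whenever `e_i + σ e_j ∈ Span P`, the set `P` contains a root with first
index `i` and second index at most `j`.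

A maximal closed subsystem `Ψ` equals `Span Ψ ∩ Φ`. Then `F(Ψ)` satisfies `(⋆)`: two of its roots
sharing an index would make one of them non-minimal, or put `e_i = ((e_i + e_j) + (e_i - e_j))/2`
into `Ψ`. It also spans `Span Ψ`, since a root of `Ψ` outside `F(Ψ)` is a combination of two
shorter roots of `Ψ`. Hence `G(F(Ψ)) = Ψ` and `|F(Ψ)| = rank Ψ`. Conversely, `G(P)` has rank `|P|`
and is maximal because a closed subsystem of the same rank containing it has the same span;
`F(G(P)) ⊆ P` by the span property above, and equality follows by counting.
-/

namespace TypeB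

open Submodule

variable {r : ℕ}

/-- The `a`-th coordinate, 1-based like `eB`; it is zero for `a ∉ [1, r]`. -/
def coord (r a : ℕ) : (Fin r → ℚ) →ₗ[ℚ] ℚ :=
  if h : 1 ≤ a ∧ a ≤ r then LinearMap.proj (⟨a - 1, by omega⟩ : Fin r) else 0

lemma coord_eB {a b : ℕ} (hb : 1 ≤ b) (hbr : b ≤ r) :
    coord r a (eB r b) = if a = b then 1 else 0 := by
  unfold coord eB
  by_cases ha : 1 ≤ a ∧ a ≤ r
  · simp only [ha, and_self, dite_true, LinearMap.coe_proj, Function.eval]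
    congr 1
    apply propext
    omega
  · simp only [ha, dite_false, LinearMap.zero_apply]
    rw [if_neg (by omega)]

lemma coord_eq_zero_of_mem_span {S : Set (Fin r → ℚ)} {a : ℕ} (h : ∀ x ∈ S, coord r a x = 0)
    {v : Fin r → ℚ} (hv : v ∈ span ℚ S) : coord r a v = 0 :=
  (span_le (p := LinearMap.ker (coord r a)).mpr h) hv

abbrev IsSign (σ : ℚ) : Prop := σ = 1 ∨ σ = -1

lemma IsSign.ne_zero {σ : ℚ} (h : IsSign σ) : σ ≠ 0 := by
  rcases h with rfl | rfl <;> norm_num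

lemma IsSign.neg_mul {σ τ : ℚ} (hσ : IsSign σ) (hτ : IsSign τ) : IsSign (-(σ * τ)) := by
  rcases hσ with rfl | rfl <;> rcases hτ with rfl | rfl <;> norm_num [IsSign]

lemma IsSign.eq_neg_of_ne {σ τ : ℚ} (hσ : IsSign σ) (hτ : IsSign τ) (h : σ ≠ τ) : τ = -σ := by
  rcases hσ with rfl | rfl <;> rcases hτ with rfl | rfl <;> norm_num at *

/-- For `σ = ±1`, the positive roots with index pair `(i, j)`. -/
def posRoot (r i j : ℕ) (σ : ℚ) : Fin r → ℚ :=
  if i = j then eB r i else eB r i + σ • eB r j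

@[simp] lemma posRoot_self (i : ℕ) (σ : ℚ) : posRoot r i i σ = eB r i := if_pos rfl

lemma posRoot_of_ne {i j : ℕ} (h : i ≠ j) (σ : ℚ) : posRoot r i j σ = eB r i + σ • eB r j :=
  if_neg h

lemma coord_posRoot {i j : ℕ} (hi : 1 ≤ i) (hij : i ≤ j) (hj : j ≤ r) (σ : ℚ) (a : ℕ) :
    coord r a (posRoot r i j σ) = if a = i then 1 else if a = j then σ else 0 := by
  rcases hij.eq_or_lt with rfl | hlt
  · simp only [posRoot_self, coord_eB hi hj]
    split_ifs <;> rfl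
  · rw [posRoot_of_ne hlt.ne, map_add, map_smul, coord_eB hi (by omega), coord_eB (by omega) hj]
    split_ifs <;> simp_all

lemma coord_snd_posRoot_ne_zero {i j : ℕ} (hi : 1 ≤ i) (hij : i ≤ j) (hj : j ≤ r) {σ : ℚ}
    (hσ : IsSign σ) : coord r j (posRoot r i j σ) ≠ 0 := by
  rw [coord_posRoot hi hij hj]
  split_ifs
  · exact one_ne_zero
  · exact hσ.ne_zero
  · omega

lemma posRoot_ne_zero {i j : ℕ} (hi : 1 ≤ i) (hij : i ≤ j) (hj : j ≤ r) {σ : ℚ}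
    (hσ : IsSign σ) : posRoot r i j σ ≠ 0 := fun h =>
  coord_snd_posRoot_ne_zero hi hij hj hσ (by rw [h, map_zero])

lemma eq_and_eq_of_posRoot_eq {i j i' j' : ℕ} {σ σ' : ℚ} (hi : 1 ≤ i) (hij : i ≤ j) (hj : j ≤ r)
    (hi' : 1 ≤ i') (hij' : i' ≤ j') (hj' : j' ≤ r) (hσ : σ ≠ 0) (hσ' : σ' ≠ 0)
    (h : posRoot r i j σ = posRoot r i' j' σ') : i = i' ∧ j = j' := by
  have key : ∀ a, (if a = i then (1 : ℚ) else if a = j then σ else 0) =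
      if a = i' then 1 else if a = j' then σ' else 0 := fun a => by
    rw [← coord_posRoot hi hij hj, ← coord_posRoot hi' hij' hj', h]
  have k1 := key i
  have k2 := key i'
  have k3 := key j
  have k4 := key j'
  grind

lemma pB_eq_posRoot {i j : ℕ} (hij : i ≤ j) : pB r i j = posRoot r i j 1 := by
  rcases hij.eq_or_lt with rfl | h
  · simp [pB]
  · rw [pB, if_neg h.ne, posRoot_of_ne h.ne, one_smul]

lemma mB_eq_posRoot {i j : ℕ} (hij : i ≤ j) : mB r i j = posRoot r i j (-1) := by
  rcases hij.eq_or_lt with rfl | h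
  · simp [mB]
  · rw [mB, if_neg h.ne, posRoot_of_ne h.ne, neg_one_smul, sub_eq_add_neg]

lemma idxB_iff {v : Fin r → ℚ} {i j : ℕ} :
    idxB r v i j ↔ 1 ≤ i ∧ i ≤ j ∧ j ≤ r ∧ ∃ σ, IsSign σ ∧ v = posRoot r i j σ := by
  constructor
  · rintro (⟨hi, hij, hj, rfl | rfl⟩ | ⟨hi, rfl, hj, rfl⟩)
    · exact ⟨hi, hij.le, hj, 1, Or.inl rfl, by rw [posRoot_of_ne hij.ne]; module⟩
    · exact ⟨hi, hij.le, hj, -1, Or.inr rfl, by rw [posRoot_of_ne hij.ne]; module⟩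
    · exact ⟨hi, le_rfl, hj, 1, Or.inl rfl, (posRoot_self i 1).symm⟩
  · rintro ⟨hi, hij, hj, σ, hσ, rfl⟩
    rcases hij.eq_or_lt with rfl | hlt
    · exact Or.inr ⟨hi, rfl, hj, posRoot_self i σ⟩
    · refine Or.inl ⟨hi, hlt, hj, ?_⟩
      rw [posRoot_of_ne hlt.ne]
      rcases hσ with rfl | rfl
      · exact Or.inl (by module)
      · exact Or.inr (by module)

lemma idxB_posRoot {i j : ℕ} (hi : 1 ≤ i) (hij : i ≤ j) (hj : j ≤ r) {σ : ℚ} (hσ : IsSign σ) :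
    idxB r (posRoot r i j σ) i j :=
  idxB_iff.2 ⟨hi, hij, hj, σ, hσ, rfl⟩

lemma mem_posB_iff {v : Fin r → ℚ} :
    v ∈ posB r ↔ ∃ i j σ, 1 ≤ i ∧ i ≤ j ∧ j ≤ r ∧ IsSign σ ∧ v = posRoot r i j σ := by
  constructor
  · rintro (⟨i, j, hi, hij, hj, h⟩ | ⟨i, hi, hir, h⟩)
    · obtain ⟨-, hij, -, σ, hσ, rfl⟩ := idxB_iff.1 (Or.inl ⟨hi, hij, hj, h.symm⟩ : idxB r v i j)
      exact ⟨i, j, σ, hi, hij, hj, hσ, rfl⟩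
    · obtain ⟨-, -, -, σ, hσ, rfl⟩ := idxB_iff.1 (Or.inr ⟨hi, rfl, hir, h⟩ : idxB r v i i)
      exact ⟨i, i, σ, hi, le_rfl, hir, hσ, rfl⟩
  · rintro ⟨i, j, σ, hi, hij, hj, hσ, rfl⟩
    rcases idxB_posRoot hi hij hj hσ with ⟨hi, hlt, hj, h⟩ | ⟨hi, rfl, hj, h⟩
    · exact Or.inl ⟨i, j, hi, hlt, hj, h.symm⟩
    · exact Or.inr ⟨i, hi, hj, h⟩

lemma posRoot_mem_posB {i j : ℕ} (hi : 1 ≤ i) (hij : i ≤ j) (hj : j ≤ r) {σ : ℚ}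
    (hσ : IsSign σ) : posRoot r i j σ ∈ posB r :=
  mem_posB_iff.2 ⟨i, j, σ, hi, hij, hj, hσ, rfl⟩

lemma mem_rootsB_iff {v : Fin r → ℚ} : v ∈ rootsB r ↔ v ∈ posB r ∨ -v ∈ posB r := by
  simp only [rootsB, posB, Set.mem_union, Set.mem_ofPred_eq, neg_eq_iff_eq_neg, neg_sub]
  constructor
  · rintro (⟨i, j, hi, hij, hj, h | h | h | h⟩ | ⟨i, hi, hir, h | h⟩)
    · exact Or.inl (Or.inl ⟨i, j, hi, hij, hj, Or.inl h⟩)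
    · exact Or.inr (Or.inl ⟨i, j, hi, hij, hj, Or.inl h⟩)
    · exact Or.inl (Or.inl ⟨i, j, hi, hij, hj, Or.inr h⟩)
    · exact Or.inr (Or.inl ⟨i, j, hi, hij, hj, Or.inr h⟩)
    · exact Or.inl (Or.inr ⟨i, hi, hir, h⟩)
    · exact Or.inr (Or.inr ⟨i, hi, hir, h⟩)
  · rintro ((⟨i, j, hi, hij, hj, h | h⟩ | ⟨i, hi, hir, h⟩) |
      (⟨i, j, hi, hij, hj, h | h⟩ | ⟨i, hi, hir, h⟩))
    · exact Or.inl ⟨i, j, hi, hij, hj, Or.inl h⟩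
    · exact Or.inl ⟨i, j, hi, hij, hj, Or.inr (Or.inr (Or.inl h))⟩
    · exact Or.inr ⟨i, hi, hir, Or.inl h⟩
    · exact Or.inl ⟨i, j, hi, hij, hj, Or.inr (Or.inl h)⟩
    · exact Or.inl ⟨i, j, hi, hij, hj, Or.inr (Or.inr (Or.inr h))⟩
    · exact Or.inr ⟨i, hi, hir, Or.inr h⟩

lemma posB_subset_rootsB : posB r ⊆ rootsB r := fun _ hv => mem_rootsB_iff.2 (Or.inl hv)

lemma neg_mem_rootsB {v : Fin r → ℚ} (hv : v ∈ rootsB r) : -v ∈ rootsB r := by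
  rw [mem_rootsB_iff, neg_neg] at *
  exact hv.symm

lemma posB_finite : (posB r).Finite := by
  refine (((Set.finite_Iic r).prod ((Set.finite_Iic r).prod (Set.toFinite {1, -1}))).image
    fun p : ℕ × ℕ × ℚ => posRoot r p.1 p.2.1 p.2.2).subset fun v hv => ?_
  obtain ⟨i, j, σ, hi, hij, hj, hσ, rfl⟩ := mem_posB_iff.1 hv
  exact ⟨(i, j, σ), ⟨Set.mem_Iic.2 (by omega), Set.mem_Iic.2 hj, hσ⟩, rfl⟩

lemma starB_mono {P Q : Set (Fin r → ℚ)} (h : Q ⊆ P) (hs : starB r P) : starB r Q :=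
  fun v hv v' hv' => hs v (h hv) v' (h hv')

lemma eq_of_starB_of_idxB_fst {P : Set (Fin r → ℚ)} (hs : starB r P) {v v' : Fin r → ℚ}
    (hv : v ∈ P) (hv' : v' ∈ P) {i j j' : ℕ} (h : idxB r v i j) (h' : idxB r v' i j') :
    v = v' :=
  by_contra fun hne => (hs v hv v' hv' hne i j i j' h h').1 rfl

lemma eq_of_starB_of_idxB_snd {P : Set (Fin r → ℚ)} (hs : starB r P) {v v' : Fin r → ℚ}
    (hv : v ∈ P) (hv' : v' ∈ P) {i i' j : ℕ} (h : idxB r v i j) (h' : idxB r v' i' j) :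
    v = v' :=
  by_contra fun hne => (hs v hv v' hv' hne i j i' j h h').2 rfl

lemma exists_posRoot_mem_max_snd {P : Set (Fin r → ℚ)} (hpos : P ⊆ posB r) (hs : starB r P)
    (hne : P.Nonempty) :
    ∃ i₀ j₀ σ₀, 1 ≤ i₀ ∧ i₀ ≤ j₀ ∧ j₀ ≤ r ∧ IsSign σ₀ ∧ posRoot r i₀ j₀ σ₀ ∈ P ∧
      (∀ x ∈ P \ {posRoot r i₀ j₀ σ₀}, coord r j₀ x = 0) ∧
      ∀ a, j₀ < a → ∀ x ∈ P, coord r a x = 0 := by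
  set S : Set ℕ := {j | ∃ i σ, 1 ≤ i ∧ i ≤ j ∧ j ≤ r ∧ IsSign σ ∧ posRoot r i j σ ∈ P}
  have hSfin : S.Finite := (Set.finite_Iic r).subset fun j ⟨_, _, _, _, hj, _⟩ => hj
  have hSne : S.Nonempty := by
    obtain ⟨x, hx⟩ := hne
    obtain ⟨i, j, σ, hi, hij, hj, hσ, rfl⟩ := mem_posB_iff.1 (hpos hx)
    exact ⟨j, i, σ, hi, hij, hj, hσ, hx⟩
  obtain ⟨j₀, ⟨i₀, σ₀, hi₀, hij₀, hj₀, hσ₀, hβ⟩, hmax⟩ := Set.exists_max_image S id hSfin hSne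
  refine ⟨i₀, j₀, σ₀, hi₀, hij₀, hj₀, hσ₀, hβ, fun x ⟨hx, hxβ⟩ => ?_, fun a ha x hx => ?_⟩
  all_goals
    obtain ⟨i, j, σ, hi, hij, hj, hσ, rfl⟩ := mem_posB_iff.1 (hpos hx)
    have hjj₀ : j ≤ j₀ := hmax j ⟨i, σ, hi, hij, hj, hσ, hx⟩
    rw [coord_posRoot hi hij hj]
  · have hne : j ≠ j₀ := by
      rintro rfl
      exact hxβ (eq_of_starB_of_idxB_snd hs hx hβ (idxB_posRoot hi hij hj hσ)
        (idxB_posRoot hi₀ hij₀ hj₀ hσ₀))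
    rw [if_neg (by omega), if_neg hne.symm]
  · rw [if_neg (by omega), if_neg (by omega)]

/-- Induction on sets satisfying `(⋆)`, removing the root with the largest second index. -/
@[elab_as_elim]
theorem starB_induction {motive : Set (Fin r → ℚ) → Prop} (empty : motive ∅)
    (peel : ∀ P, P ⊆ posB r → starB r P → ∀ i₀ j₀ σ₀, 1 ≤ i₀ → i₀ ≤ j₀ → j₀ ≤ r → IsSign σ₀ →
      posRoot r i₀ j₀ σ₀ ∈ P → (∀ x ∈ P \ {posRoot r i₀ j₀ σ₀}, coord r j₀ x = 0) →
      (∀ a, j₀ < a → ∀ x ∈ P, coord r a x = 0) → motive (P \ {posRoot r i₀ j₀ σ₀}) → motive P)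
    {P : Set (Fin r → ℚ)} (hpos : P ⊆ posB r) (hs : starB r P) : motive P := by
  induction hn : P.ncard using Nat.strong_induction_on generalizing P with
  | _ n ih =>
  rcases P.eq_empty_or_nonempty with rfl | hne
  · exact empty
  obtain ⟨i₀, j₀, σ₀, hi₀, hij₀, hj₀, hσ₀, hβ, hzero, hhigh⟩ :=
    exists_posRoot_mem_max_snd hpos hs hne
  refine peel P hpos hs i₀ j₀ σ₀ hi₀ hij₀ hj₀ hσ₀ hβ hzero hhigh (ih _ ?_
    (Set.sdiff_subset.trans hpos) (starB_mono Set.sdiff_subset hs) rfl)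
  exact hn ▸ Set.ncard_sdiff_singleton_lt_of_mem hβ (posB_finite.subset hpos)

lemma linearIndepOn_of_starB {P : Set (Fin r → ℚ)} (hpos : P ⊆ posB r) (hs : starB r P) :
    LinearIndepOn ℚ id P := by
  refine starB_induction (linearIndepOn_empty ℚ id)
    (fun P _ _ i₀ j₀ σ₀ hi₀ hij₀ hj₀ hσ₀ hβ hzero _ ih => ?_) hpos hs
  have hβ' : posRoot r i₀ j₀ σ₀ ∉ span ℚ (P \ {posRoot r i₀ j₀ σ₀}) := fun h =>
    coord_snd_posRoot_ne_zero hi₀ hij₀ hj₀ hσ₀ (coord_eq_zero_of_mem_span hzero h)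
  simpa [Set.insert_eq_of_mem hβ] using ih.id_insert hβ'

lemma ncard_eq_finrank_of_starB {P : Set (Fin r → ℚ)} (hpos : P ⊆ posB r) (hs : starB r P) :
    P.ncard = Module.finrank ℚ (span ℚ P) := by
  have := (posB_finite.subset hpos).fintype
  rw [finrank_span_set_eq_card (linearIndepOn_of_starB hpos hs), Set.ncard_eq_toFinset_card']

def HasRootFrom (P : Set (Fin r → ℚ)) (i j : ℕ) : Prop :=
  ∃ d τ, i ≤ d ∧ d ≤ j ∧ IsSign τ ∧ posRoot r i d τ ∈ P

lemma HasRootFrom.mono {P Q : Set (Fin r → ℚ)} {i j j' : ℕ} (h : HasRootFrom P i j)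
    (hPQ : P ⊆ Q) (hj : j ≤ j') : HasRootFrom Q i j' :=
  let ⟨d, τ, h1, h2, hτ, hd⟩ := h
  ⟨d, τ, h1, h2.trans hj, hτ, hPQ hd⟩

lemma hasRootFrom_of_eq_smul_posRoot_add {P P' : Set (Fin r → ℚ)} (hs : starB r P)
    (hP' : P' ⊆ P) {i₀ j : ℕ} {σ₀ : ℚ} (hi₀ : 1 ≤ i₀) (hlt₀ : i₀ < j) (hj : j ≤ r)
    (hσ₀ : IsSign σ₀) (hβ : posRoot r i₀ j σ₀ ∈ P) (hβ' : posRoot r i₀ j σ₀ ∉ P')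
    (ih : ∀ i j σ, 1 ≤ i → i ≤ j → j ≤ r → IsSign σ → posRoot r i j σ ∈ span ℚ P' →
      HasRootFrom P' i j)
    {i : ℕ} {σ c : ℚ} {x : Fin r → ℚ} (hi : 1 ≤ i) (hij : i ≤ j) (hσ : IsSign σ)
    (hx : x ∈ span ℚ P') (hx0 : coord r j x = 0)
    (hvx : posRoot r i j σ = c • posRoot r i₀ j σ₀ + x) : HasRootFrom P i j := by
  have hclash : ∀ {d}, d ≤ r → ¬HasRootFrom P' i₀ d := fun hd ⟨d', τ, hd1, hd2, hτ, hmem⟩ =>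
    hβ' (eq_of_starB_of_idxB_fst hs (hP' hmem) hβ (idxB_posRoot hi₀ hd1 (by omega) hτ)
      (idxB_posRoot hi₀ hlt₀.le hj hσ₀) ▸ hmem)
  have hxv : x = posRoot r i j σ - c • posRoot r i₀ j σ₀ := by rw [hvx]; abel
  have hcoord := congrArg (coord r j) hvx
  rw [map_add, map_smul, hx0, add_zero, smul_eq_mul, coord_posRoot hi hij hj,
    coord_posRoot hi₀ hlt₀.le hj] at hcoord
  rcases hij.eq_or_lt with hij | hlt
  · -- `x = -σ₀ e_{i₀}` clashes with `e_{i₀} + σ₀ e_j ∈ P` by `(⋆)`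
    subst i
    simp only [hlt₀.ne', ↓reduceIte] at hcoord
    have hc : c = σ₀ := by rcases hσ₀ with rfl | rfl <;> linarith
    have hei : posRoot r i₀ i₀ 1 ∈ span ℚ P' := by
      convert smul_mem _ (-σ₀) hx using 1
      rw [hxv, hc, posRoot_of_ne hlt₀.ne, posRoot_self, posRoot_self]
      rcases hσ₀ with rfl | rfl <;> module
    exact absurd (ih i₀ i₀ 1 hi₀ le_rfl (by omega) (Or.inl rfl) hei) (hclash (by omega))
  simp only [hlt.ne', hlt₀.ne', ↓reduceIte] at hcoord
  have hc : c = σ * σ₀ := by rcases hσ₀ with rfl | rfl <;> linarith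
  rcases lt_trichotomy i i₀ with hii₀ | hii₀ | hii₀
  · -- `x = e_i - σ σ₀ e_{i₀}`
    have hw : posRoot r i i₀ (-(σ * σ₀)) ∈ span ℚ P' := by
      convert hx using 1
      rw [hxv, hc, posRoot_of_ne hlt₀.ne, posRoot_of_ne hlt.ne, posRoot_of_ne hii₀.ne]
      rcases hσ₀ with rfl | rfl <;> rcases hσ with rfl | rfl <;> module
    exact (ih i i₀ _ hi hii₀.le (by omega) (hσ.neg_mul hσ₀) hw).mono hP' hlt₀.le
  · subst i₀
    by_cases hσσ₀ : σ = σ₀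
    · exact ⟨j, σ, hlt.le, le_rfl, hσ, hσσ₀ ▸ hβ⟩
    -- `x = 2 e_i`
    have hei : posRoot r i i 1 ∈ span ℚ P' := by
      convert smul_mem _ (2⁻¹ : ℚ) hx using 1
      simp only [hxv, hc, posRoot_of_ne hlt.ne, posRoot_self]
      rcases hσ₀ with rfl | rfl <;> rcases hσ with rfl | rfl <;> first | module | norm_num at hσσ₀
    exact (ih i i 1 hi le_rfl (by omega) (Or.inl rfl) hei).mono hP' hlt.le
  · -- `-σ σ₀ x = e_{i₀} - σ σ₀ e_i` clashes with `e_{i₀} + σ₀ e_j ∈ P`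
    have hw : posRoot r i₀ i (-(σ * σ₀)) ∈ span ℚ P' := by
      convert smul_mem _ (-(σ * σ₀)) hx using 1
      rw [hxv, hc, posRoot_of_ne hlt₀.ne, posRoot_of_ne hlt.ne, posRoot_of_ne hii₀.ne]
      rcases hσ₀ with rfl | rfl <;> rcases hσ with rfl | rfl <;> module
    exact absurd (ih i₀ i _ hi₀ hii₀.le (by omega) (hσ.neg_mul hσ₀) hw) (hclash (by omega))

lemma hasRootFrom_of_mem_span {P : Set (Fin r → ℚ)} (hpos : P ⊆ posB r)
    (hs : starB r P) : ∀ i j σ, 1 ≤ i → i ≤ j → j ≤ r → IsSign σ →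
      posRoot r i j σ ∈ span ℚ P → HasRootFrom P i j := by
  refine starB_induction (fun i j σ hi hij hj hσ hv => ?_) ?_ hpos hs
  · exact absurd (by simpa using hv) (posRoot_ne_zero hi hij hj hσ)
  intro P _ hs i₀ j₀ σ₀ hi₀ hij₀ hj₀ hσ₀ hβ hzero hhigh ih i j σ hi hij hj hσ hv
  have hjj₀ : j ≤ j₀ := by
    by_contra! h
    exact coord_snd_posRoot_ne_zero hi hij hj hσ (coord_eq_zero_of_mem_span (hhigh j h) hv)
  rw [← Set.insert_eq_of_mem hβ, ← Set.insert_sdiff_singleton] at hv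
  obtain ⟨c, x, hx, hvx⟩ := mem_span_insert.1 hv
  have hx0 := coord_eq_zero_of_mem_span hzero hx
  rcases hjj₀.lt_or_eq with hlt | hjj₀
  · -- the coefficient of the peeled root vanishes
    have hcoord := congrArg (coord r j₀) hvx
    rw [map_add, map_smul, hx0, add_zero, smul_eq_mul, coord_posRoot hi hij hj, if_neg (by omega),
      if_neg (by omega), eq_comm, mul_eq_zero] at hcoord
    rw [hcoord.resolve_right (coord_snd_posRoot_ne_zero hi₀ hij₀ hj₀ hσ₀), zero_smul,
      zero_add] at hvx
    exact (ih i j σ hi hij hj hσ (hvx ▸ hx)).mono Set.sdiff_subset le_rfl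
  subst j₀
  rcases hij₀.eq_or_lt with hij₀ | hlt₀
  · -- the peeled root is `e_j`, so `x = e_i`
    subst i₀
    rcases hij.eq_or_lt with hij | hlt
    · subst i
      exact ⟨j, 1, le_rfl, le_rfl, Or.inl rfl, by simpa using hβ⟩
    have hcoord := congrArg (coord r j) hvx
    rw [map_add, map_smul, hx0, add_zero, smul_eq_mul, coord_posRoot hi hij hj,
      coord_posRoot hi₀ le_rfl hj] at hcoord
    simp only [hlt.ne', ↓reduceIte, mul_one] at hcoord
    have hei : posRoot r i i 1 ∈ span ℚ (P \ {posRoot r j j σ₀}) := by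
      convert hx using 1
      rw [← sub_eq_of_eq_add' hvx, ← hcoord, posRoot_of_ne hlt.ne, posRoot_self, posRoot_self]
      abel
    exact (ih i i 1 hi le_rfl (by omega) (Or.inl rfl) hei).mono Set.sdiff_subset hij
  exact hasRootFrom_of_eq_smul_posRoot_add (P' := P \ {_}) hs Set.sdiff_subset hi₀ hlt₀ hj hσ₀ hβ
    (fun h => h.2 rfl) ih hi hij hσ hx hx0 hvx

/-- The minimality condition in the definition of `F(Ψ)`. -/
def NoInnerRoot (Ψ : Set (Fin r → ℚ)) (i j : ℕ) : Prop :=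
  (∀ d τ, i ≤ d → d < j → IsSign τ → posRoot r i d τ ∉ Ψ) ∧
    ∀ d τ, i < d → d ≤ j → IsSign τ → posRoot r d j τ ∉ Ψ

lemma mem_FmapB_iff {Ψ : Set (Fin r → ℚ)} {i j : ℕ} {σ : ℚ} (hi : 1 ≤ i) (hij : i ≤ j)
    (hj : j ≤ r) (hσ : IsSign σ) :
    posRoot r i j σ ∈ FmapB r Ψ ↔ posRoot r i j σ ∈ Ψ ∧ NoInnerRoot Ψ i j := by
  constructor
  · rintro (⟨a, b, ha, hab, hb, hv, hmem, h1, h2⟩ | ⟨a, ha, har, hv, hmem⟩)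
    · obtain ⟨-, -, -, ρ, hρ, hvρ⟩ := idxB_iff.1 (Or.inl ⟨ha, hab, hb, hv⟩ : idxB r _ a b)
      obtain ⟨rfl, rfl⟩ := eq_and_eq_of_posRoot_eq hi hij hj ha hab.le hb hσ.ne_zero hρ.ne_zero hvρ
      refine ⟨hmem, fun d τ hd hdj hτ => ?_, fun d τ hd hdj hτ => ?_⟩
      · rcases hτ with rfl | rfl
        · exact pB_eq_posRoot hd ▸ (h1 d hd hdj).1
        · exact mB_eq_posRoot hd ▸ (h1 d hd hdj).2
      · rcases hτ with rfl | rfl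
        · exact pB_eq_posRoot hdj ▸ (h2 d hd hdj).1
        · exact mB_eq_posRoot hdj ▸ (h2 d hd hdj).2
    · obtain ⟨rfl, rfl⟩ := eq_and_eq_of_posRoot_eq hi hij hj ha le_rfl har hσ.ne_zero one_ne_zero
        (hv.trans (posRoot_self a 1).symm)
      exact ⟨hv ▸ hmem, fun _ _ _ _ _ => by omega, fun _ _ _ _ _ => by omega⟩
  · rintro ⟨hmem, h1, h2⟩
    rcases hij.eq_or_lt with rfl | hlt
    · exact Or.inr ⟨i, hi, hj, posRoot_self i σ, by simpa using hmem⟩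
    refine Or.inl ⟨i, j, hi, hlt, hj, ?_, hmem, fun d hd hdj => ?_, fun d hd hdj => ?_⟩
    · exact ((idxB_posRoot hi hij hj hσ).resolve_right fun h => hlt.ne h.2.1).2.2.2
    · rw [pB_eq_posRoot hd, mB_eq_posRoot hd]
      exact ⟨h1 d 1 hd hdj (Or.inl rfl), h1 d (-1) hd hdj (Or.inr rfl)⟩
    · rw [pB_eq_posRoot hdj, mB_eq_posRoot hdj]
      exact ⟨h2 d 1 hd hdj (Or.inl rfl), h2 d (-1) hd hdj (Or.inr rfl)⟩

lemma FmapB_subset (Ψ : Set (Fin r → ℚ)) : FmapB r Ψ ⊆ Ψ := by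
  rintro v (⟨_, _, _, _, _, _, h, _⟩ | ⟨_, _, _, rfl, h⟩)
  · exact h
  · exact h

lemma FmapB_subset_posB (Ψ : Set (Fin r → ℚ)) : FmapB r Ψ ⊆ posB r := by
  rintro v (⟨i, j, hi, hij, hj, hv, -⟩ | ⟨i, hi, hir, rfl, -⟩)
  · exact Or.inl ⟨i, j, hi, hij, hj, hv.symm⟩
  · exact Or.inr ⟨i, hi, hir, rfl⟩

lemma posRoot_mem_of_mem_span {Ψ : Set (Fin r → ℚ)} (hΨ : GmapB r Ψ = Ψ) {i j : ℕ} {σ : ℚ}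
    (hi : 1 ≤ i) (hij : i ≤ j) (hj : j ≤ r) (hσ : IsSign σ)
    (h : posRoot r i j σ ∈ span ℚ Ψ) : posRoot r i j σ ∈ Ψ :=
  hΨ ▸ ⟨h, posB_subset_rootsB (posRoot_mem_posB hi hij hj hσ)⟩

lemma posRoot_self_mem_of_mem_of_neg_mem {Ψ : Set (Fin r → ℚ)} (hΨ : GmapB r Ψ = Ψ)
    {i j : ℕ} {σ : ℚ} (hi : 1 ≤ i) (hij : i < j) (hj : j ≤ r) (h : posRoot r i j σ ∈ Ψ)
    (h' : posRoot r i j (-σ) ∈ Ψ) : posRoot r i i 1 ∈ Ψ := by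
  refine posRoot_mem_of_mem_span hΨ hi le_rfl (by omega) (Or.inl rfl) ?_
  convert smul_mem _ (2⁻¹ : ℚ) (add_mem (subset_span h) (subset_span h')) using 1
  rw [posRoot_self, posRoot_of_ne hij.ne, posRoot_of_ne hij.ne]
  module

lemma posRoot_eq_of_mem_FmapB {Ψ : Set (Fin r → ℚ)} (hΨ : GmapB r Ψ = Ψ) {i j : ℕ}
    {σ σ' : ℚ} (hi : 1 ≤ i) (hij : i ≤ j) (hj : j ≤ r) (hσ : IsSign σ) (hσ' : IsSign σ')
    (h : posRoot r i j σ ∈ FmapB r Ψ) (h' : posRoot r i j σ' ∈ FmapB r Ψ) :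
    posRoot r i j σ = posRoot r i j σ' := by
  rcases hij.eq_or_lt with rfl | hlt
  · simp
  by_cases hσσ' : σ = σ'
  · rw [hσσ']
  rw [hσ.eq_neg_of_ne hσ' hσσ'] at h'
  have hei := posRoot_self_mem_of_mem_of_neg_mem hΨ hi hlt hj (FmapB_subset Ψ h)
    (FmapB_subset Ψ h')
  exact absurd hei (((mem_FmapB_iff hi hij hj hσ).1 h).2.1 i 1 le_rfl hlt (Or.inl rfl))

lemma posRoot_eq_of_mem_FmapB_fst {Ψ : Set (Fin r → ℚ)} (hΨ : GmapB r Ψ = Ψ) {i j j' : ℕ}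
    {σ σ' : ℚ} (hi : 1 ≤ i) (hij : i ≤ j) (hjj' : j ≤ j') (hj' : j' ≤ r) (hσ : IsSign σ)
    (hσ' : IsSign σ') (h : posRoot r i j σ ∈ FmapB r Ψ) (h' : posRoot r i j' σ' ∈ FmapB r Ψ) :
    posRoot r i j σ = posRoot r i j' σ' := by
  rcases hjj'.eq_or_lt with rfl | hlt
  · exact posRoot_eq_of_mem_FmapB hΨ hi hij hj' hσ hσ' h h'
  exact absurd (FmapB_subset Ψ h)
    (((mem_FmapB_iff hi (by omega) hj' hσ').1 h').2.1 j σ hij hlt hσ)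

lemma posRoot_eq_of_mem_FmapB_snd {Ψ : Set (Fin r → ℚ)} (hΨ : GmapB r Ψ = Ψ) {i i' j : ℕ}
    {σ σ' : ℚ} (hi : 1 ≤ i) (hii' : i ≤ i') (hi'j : i' ≤ j) (hj : j ≤ r) (hσ : IsSign σ)
    (hσ' : IsSign σ') (h : posRoot r i j σ ∈ FmapB r Ψ) (h' : posRoot r i' j σ' ∈ FmapB r Ψ) :
    posRoot r i j σ = posRoot r i' j σ' := by
  rcases hii'.eq_or_lt with rfl | hlt
  · exact posRoot_eq_of_mem_FmapB hΨ hi hi'j hj hσ hσ' h h'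
  exact absurd (FmapB_subset Ψ h')
    (((mem_FmapB_iff hi (by omega) hj hσ).1 h).2.2 i' σ' hlt hi'j hσ')

lemma starB_FmapB {Ψ : Set (Fin r → ℚ)} (hΨ : GmapB r Ψ = Ψ) : starB r (FmapB r Ψ) := by
  intro v hv v' hv' hne i j i' j' h h'
  obtain ⟨hi, hij, hj, σ, hσ, rfl⟩ := idxB_iff.1 h
  obtain ⟨hi', hij', hj', σ', hσ', rfl⟩ := idxB_iff.1 h'
  constructor
  · rintro rfl
    rcases le_total j j' with hjj' | hjj'
    · exact hne (posRoot_eq_of_mem_FmapB_fst hΨ hi hij hjj' hj' hσ hσ' hv hv')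
    · exact hne (posRoot_eq_of_mem_FmapB_fst hΨ hi hij' hjj' hj hσ' hσ hv' hv).symm
  · rintro rfl
    rcases le_total i i' with hii' | hii'
    · exact hne (posRoot_eq_of_mem_FmapB_snd hΨ hi hii' hij' hj hσ hσ' hv hv')
    · exact hne (posRoot_eq_of_mem_FmapB_snd hΨ hi' hii' hij hj hσ' hσ hv' hv).symm

lemma posRoot_mem_span_FmapB {Ψ : Set (Fin r → ℚ)} (hΨ : GmapB r Ψ = Ψ) {i j : ℕ} {σ : ℚ}
    (hi : 1 ≤ i) (hij : i ≤ j) (hj : j ≤ r) (hσ : IsSign σ) (h : posRoot r i j σ ∈ Ψ) :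
    posRoot r i j σ ∈ span ℚ (FmapB r Ψ) := by
  induction hn : j - i using Nat.strong_induction_on generalizing i j σ with
  | _ n ih =>
  by_cases hF : posRoot r i j σ ∈ FmapB r Ψ
  · exact subset_span hF
  have hlt : i < j := hij.lt_of_ne fun hij' =>
    hF ((mem_FmapB_iff hi hij hj hσ).2 ⟨h, fun _ _ _ _ _ => by omega, fun _ _ _ _ _ => by omega⟩)
  have ih' : ∀ {a b ρ}, 1 ≤ a → a ≤ b → b ≤ r → IsSign ρ → b - a < j - i →
      posRoot r a b ρ ∈ Ψ → posRoot r a b ρ ∈ span ℚ (FmapB r Ψ) :=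
    fun ha hab hb hρ hlen hmem => ih _ (hn ▸ hlen) ha hab hb hρ hmem rfl
  have hsat {a b ρ} := @posRoot_mem_of_mem_span r Ψ hΨ a b ρ
  have hends : posRoot r i i 1 ∈ Ψ ∨ posRoot r j j 1 ∈ Ψ →
      posRoot r i j σ ∈ span ℚ (FmapB r Ψ) := by
    have hv : posRoot r i j σ = posRoot r i i 1 + σ • posRoot r j j 1 := by
      simp [posRoot_of_ne hlt.ne]
    intro hends
    have hei : posRoot r i i 1 ∈ Ψ := hends.elim id fun hej =>
      hsat hi le_rfl (by omega) (Or.inl rfl)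
        (eq_sub_of_add_eq hv.symm ▸ sub_mem (subset_span h) (smul_mem _ σ (subset_span hej)))
    have hej : posRoot r j j 1 ∈ Ψ := by
      refine hsat (by omega) le_rfl hj (Or.inl rfl) ?_
      convert smul_mem _ σ (sub_mem (subset_span h) (subset_span hei)) using 1
      rw [hv]
      rcases hσ with rfl | rfl <;> module
    rw [hv]
    exact add_mem (ih' hi le_rfl (by omega) (Or.inl rfl) (by omega) hei)
      (smul_mem _ _ (ih' (by omega) le_rfl hj (Or.inl rfl) (by omega) hej))
  simp only [mem_FmapB_iff hi hij hj hσ, h, true_and, NoInnerRoot, not_and_or, not_forall,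
    not_not] at hF
  rcases hF with ⟨d, τ, hid, hdj, hτ, hd⟩ | ⟨d, τ, hid, hdj, hτ, hd⟩
  · rcases hid.eq_or_lt with rfl | hid
    · exact hends (Or.inl (by simpa using hd))
    -- `e_i + σ e_j = (e_i + τ e_d) - τ (e_d - τ σ e_j)`
    have hw : posRoot r d j (-(τ * σ)) ∈ Ψ := by
      refine hsat (by omega) hdj.le hj (hτ.neg_mul hσ) ?_
      convert smul_mem _ (-τ) (sub_mem (subset_span h) (subset_span hd)) using 1
      rw [posRoot_of_ne hdj.ne, posRoot_of_ne hlt.ne, posRoot_of_ne hid.ne]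
      rcases hτ with rfl | rfl <;> rcases hσ with rfl | rfl <;> module
    have hv : posRoot r i j σ = posRoot r i d τ + (-τ) • posRoot r d j (-(τ * σ)) := by
      rw [posRoot_of_ne hdj.ne, posRoot_of_ne hlt.ne, posRoot_of_ne hid.ne]
      rcases hτ with rfl | rfl <;> rcases hσ with rfl | rfl <;> module
    rw [hv]
    exact add_mem (ih' hi hid.le (by omega) hτ (by omega) hd)
      (smul_mem _ _ (ih' (by omega) hdj.le hj (hτ.neg_mul hσ) (by omega) hw))
  · rcases hdj.eq_or_lt with rfl | hdj
    · exact hends (Or.inr (by simpa using hd))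
    -- `e_i + σ e_j = (e_i - σ τ e_d) + σ τ (e_d + τ e_j)`
    have hw : posRoot r i d (-(σ * τ)) ∈ Ψ := by
      refine hsat hi hid.le (by omega) (hσ.neg_mul hτ) ?_
      convert sub_mem (subset_span h) (smul_mem _ (σ * τ) (subset_span hd)) using 1
      rw [posRoot_of_ne hdj.ne, posRoot_of_ne hlt.ne, posRoot_of_ne hid.ne]
      rcases hτ with rfl | rfl <;> rcases hσ with rfl | rfl <;> module
    have hv : posRoot r i j σ = posRoot r i d (-(σ * τ)) + (σ * τ) • posRoot r d j τ := by
      rw [posRoot_of_ne hdj.ne, posRoot_of_ne hlt.ne, posRoot_of_ne hid.ne]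
      rcases hτ with rfl | rfl <;> rcases hσ with rfl | rfl <;> module
    rw [hv]
    exact add_mem (ih' hi hid.le (by omega) (hσ.neg_mul hτ) (by omega) hw)
      (smul_mem _ _ (ih' (by omega) hdj.le hj hτ (by omega) hd))

lemma span_FmapB {Ψ : Set (Fin r → ℚ)} (hΨ : GmapB r Ψ = Ψ) :
    span ℚ (FmapB r Ψ) = span ℚ Ψ := by
  refine le_antisymm (span_mono (FmapB_subset Ψ)) (span_le.2 fun v hv => ?_)
  have hpos : ∀ {u}, u ∈ posB r → u ∈ Ψ → u ∈ span ℚ (FmapB r Ψ) := fun hu hmem => by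
    obtain ⟨i, j, σ, hi, hij, hj, hσ, rfl⟩ := mem_posB_iff.1 hu
    exact posRoot_mem_span_FmapB hΨ hi hij hj hσ hmem
  have hroot : v ∈ rootsB r := (hΨ.symm ▸ hv : v ∈ GmapB r Ψ).2
  rcases mem_rootsB_iff.1 hroot with hv' | hv'
  · exact hpos hv' hv
  · have hneg : -v ∈ Ψ := hΨ ▸ ⟨neg_mem (subset_span hv), neg_mem_rootsB hroot⟩
    simpa using neg_mem (hpos hv' hneg)

lemma isClosedSub_GmapB (S : Set (Fin r → ℚ)) : IsClosedSub (rootsB r) (GmapB r S) :=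
  ⟨Set.inter_subset_right, fun _ hl => ⟨neg_mem hl.1, neg_mem_rootsB hl.2⟩,
    fun _ hl _ hm hsum => ⟨add_mem hl.1 hm.1, hsum⟩⟩

lemma subset_GmapB {S : Set (Fin r → ℚ)} (hS : S ⊆ rootsB r) : S ⊆ GmapB r S :=
  fun _ hv => ⟨subset_span hv, hS hv⟩

lemma span_GmapB {S : Set (Fin r → ℚ)} (hS : S ⊆ rootsB r) : span ℚ (GmapB r S) = span ℚ S :=
  le_antisymm (span_le.2 fun _ hv => hv.1) (span_mono (subset_GmapB hS))

lemma GmapB_GmapB {S : Set (Fin r → ℚ)} (hS : S ⊆ rootsB r) : GmapB r (GmapB r S) = GmapB r S :=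
  congrArg (fun W : Submodule ℚ (Fin r → ℚ) => (W : Set (Fin r → ℚ)) ∩ rootsB r) (span_GmapB hS)

lemma GmapB_eq_of_isMaxClosedOfRank {Ψ : Set (Fin r → ℚ)} {m : ℕ}
    (h : IsMaxClosedOfRank (rootsB r) Ψ m) : GmapB r Ψ = Ψ :=
  h.2.2 _ (isClosedSub_GmapB Ψ) (by rw [rankOf, span_GmapB h.1.1]; exact h.2.1)
    (subset_GmapB h.1.1)

lemma isMaxClosedOfRank_GmapB {P : Set (Fin r → ℚ)} (hpos : P ⊆ posB r) (hs : starB r P) :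
    IsMaxClosedOfRank (rootsB r) (GmapB r P) P.ncard := by
  have hspan := span_GmapB (hpos.trans posB_subset_rootsB)
  have hrank := ncard_eq_finrank_of_starB hpos hs
  refine ⟨isClosedSub_GmapB P, by rw [rankOf, hspan, hrank],
    fun Ψ' hcl hrk hsub => (Set.Subset.antisymm (fun v hv => ⟨?_, hcl.1 hv⟩) hsub)⟩
  have hle : span ℚ P ≤ span ℚ Ψ' := hspan ▸ span_mono hsub
  rw [eq_of_le_of_finrank_eq hle (hrank.symm.trans hrk.symm)]
  exact subset_span hv

lemma FmapB_mem_of_isMaxClosedOfRank {Ψ : Set (Fin r → ℚ)} {m : ℕ}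
    (h : IsMaxClosedOfRank (rootsB r) Ψ m) :
    FmapB r Ψ ⊆ posB r ∧ (FmapB r Ψ).ncard = m ∧ starB r (FmapB r Ψ) := by
  have hΨ := GmapB_eq_of_isMaxClosedOfRank h
  refine ⟨FmapB_subset_posB Ψ, ?_, starB_FmapB hΨ⟩
  rw [ncard_eq_finrank_of_starB (FmapB_subset_posB Ψ) (starB_FmapB hΨ), span_FmapB hΨ]
  exact h.2.1

lemma GmapB_FmapB {Ψ : Set (Fin r → ℚ)} (hΨ : GmapB r Ψ = Ψ) : GmapB r (FmapB r Ψ) = Ψ :=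
  (congrArg (fun W : Submodule ℚ (Fin r → ℚ) => (W : Set (Fin r → ℚ)) ∩ rootsB r)
    (span_FmapB hΨ)).trans hΨ

lemma FmapB_GmapB {P : Set (Fin r → ℚ)} (hpos : P ⊆ posB r) (hs : starB r P) :
    FmapB r (GmapB r P) = P := by
  have hsat := GmapB_GmapB (hpos.trans posB_subset_rootsB)
  have hPG := subset_GmapB (hpos.trans posB_subset_rootsB)
  have hsub : FmapB r (GmapB r P) ⊆ P := by
    intro v hv
    obtain ⟨i, j, σ, hi, hij, hj, hσ, rfl⟩ := mem_posB_iff.1 (FmapB_subset_posB _ hv)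
    obtain ⟨hmem, hno⟩ := (mem_FmapB_iff hi hij hj hσ).1 hv
    obtain ⟨d, τ, hid, hdj, hτ, hd⟩ := hasRootFrom_of_mem_span hpos hs i j σ hi hij hj hσ hmem.1
    rcases hdj.lt_or_eq with hdj | rfl
    · exact absurd (hPG hd) (hno.1 d τ hid hdj hτ)
    rcases hij.eq_or_lt with rfl | hlt
    · simpa using hd
    by_cases hτσ : τ = σ
    · exact hτσ ▸ hd
    rw [hσ.eq_neg_of_ne hτ (Ne.symm hτσ)] at hd
    exact absurd (posRoot_self_mem_of_mem_of_neg_mem hsat hi hlt hj hmem (hPG hd))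
      (hno.1 i 1 le_rfl hlt (Or.inl rfl))
  refine Set.eq_of_subset_of_ncard_le hsub ?_ (posB_finite.subset hpos)
  rw [ncard_eq_finrank_of_starB hpos hs, ncard_eq_finrank_of_starB (FmapB_subset_posB _)
    (starB_FmapB hsat), span_FmapB hsat, span_GmapB (hpos.trans posB_subset_rootsB)]

end TypeB

theorem statement19_general (r k : ℕ) :
    Set.BijOn (FmapB r)
      {Ψ : Set (Fin r → ℚ) | IsMaxClosedOfRank (rootsB r) Ψ (r - k)}
      {P : Set (Fin r → ℚ) | P ⊆ posB r ∧ P.ncard = r - k ∧ starB r P} ∧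
    Set.InvOn (GmapB r) (FmapB r)
      {Ψ : Set (Fin r → ℚ) | IsMaxClosedOfRank (rootsB r) Ψ (r - k)}
      {P : Set (Fin r → ℚ) | P ⊆ posB r ∧ P.ncard = r - k ∧ starB r P} := by
  have hinv : Set.InvOn (GmapB r) (FmapB r)
      {Ψ : Set (Fin r → ℚ) | IsMaxClosedOfRank (rootsB r) Ψ (r - k)}
      {P : Set (Fin r → ℚ) | P ⊆ posB r ∧ P.ncard = r - k ∧ starB r P} :=
    ⟨fun _ hΨ => TypeB.GmapB_FmapB (TypeB.GmapB_eq_of_isMaxClosedOfRank hΨ),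
      fun _ hP => TypeB.FmapB_GmapB hP.1 hP.2.2⟩
  exact ⟨hinv.bijOn (fun _ hΨ => TypeB.FmapB_mem_of_isMaxClosedOfRank hΨ)
    (fun _ ⟨hpos, hcard, hs⟩ => hcard ▸ TypeB.isMaxClosedOfRank_GmapB hpos hs), hinv⟩

theorem statement19 (r k : ℕ) (hr : 2 ≤ r) (hk : k ≤ r) :
    Set.BijOn (FmapB r)
      {Ψ : Set (Fin r → ℚ) | IsMaxClosedOfRank (rootsB r) Ψ (r - k)}
      {P : Set (Fin r → ℚ) | P ⊆ posB r ∧ P.ncard = r - k ∧ starB r P} ∧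
    Set.InvOn (GmapB r) (FmapB r)
      {Ψ : Set (Fin r → ℚ) | IsMaxClosedOfRank (rootsB r) Ψ (r - k)}
      {P : Set (Fin r → ℚ) | P ⊆ posB r ∧ P.ncard = r - k ∧ starB r P} :=
  statement19_general r k
end
end
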